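/- Let x ∈ ℝᵈ with x ≠ 0. If the right-hand derivative of h_x at ω = 0 is strictly negative, then g(x) = h_x(0) = xᵀ (P₂ + S₂₂)⁻¹ x; moreover the infimum defining g(x) is attained at some P* ∈ 𝒜, i.e. there exists P* ∈ 𝒜 with xᵀ Hᵀ (P*)⁻¹ H x = h_x(0). -/

import Mathlib

/-! For every admissible `P` the lower-right block is `M = P₂ + S₂₂`, so the variational formula
`zᵀ P⁻¹ z = max_w (2 wᵀz - wᵀ P w)` with `z = H x` and `w = (0, M⁻¹ x)` gives
`g(x) ≥ xᵀ M⁻¹ x = h_x(0)`.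

The same formula for `Bc(ω)` with `w = (ω a, u)`, where `u = M⁻¹ x` and `P₁ a = x - S₁₂ u`, bounds
`h_x` from below by an explicit function touching it at `0` with slope `aᵀ P₁ a - uᵀ P₂ u`; a
negative right derivative of `h_x` therefore forces `aᵀ P₁ a < uᵀ P₂ u`. Under that inequality the
rank-one block `K = (P₁ a)(P₂ u)ᵀ / uᵀ P₂ u` keeps `[[P₁, K], [Kᵀ, P₂]]` positive semidefinite
(Cauchy–Schwarz), and `P* = [[P₁, K], [Kᵀ, P₂]] + S` maps `(0, u)` to `H x`, so it attains the
bound.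
-/

open Matrix Set

noncomputable section

/-- `H = [I_d; I_d]`, the two vertically stacked `d×d` identity blocks. -/
def Hmat (d : ℕ) : Matrix (Fin d ⊕ Fin d) (Fin d) ℝ :=
  Matrix.fromRows 1 1

/-- The admissible set `𝒜`: all matrices `P⁽¹⁾ + S` with `P⁽¹⁾` positive
semidefinite with diagonal blocks `P₁` and `P₂`. -/
def Adm (d : ℕ) (P₁ P₂ : Matrix (Fin d) (Fin d) ℝ)
    (S : Matrix (Fin d ⊕ Fin d) (Fin d ⊕ Fin d) ℝ) :
    Set (Matrix (Fin d ⊕ Fin d) (Fin d ⊕ Fin d) ℝ) :=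
  {P | ∃ Q : Matrix (Fin d ⊕ Fin d) (Fin d ⊕ Fin d) ℝ,
      Q.PosSemidef ∧ Q.toBlocks₁₁ = P₁ ∧ Q.toBlocks₂₂ = P₂ ∧ P = Q + S}

/-- The ESCI centralized bound `Bc(ω) = blockdiag(ω⁻¹ P₁, (1-ω)⁻¹ P₂) + S`. -/
def Bc (d : ℕ) (P₁ P₂ : Matrix (Fin d) (Fin d) ℝ)
    (S : Matrix (Fin d ⊕ Fin d) (Fin d ⊕ Fin d) ℝ) (ω : ℝ) :
    Matrix (Fin d ⊕ Fin d) (Fin d ⊕ Fin d) ℝ :=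
  Matrix.fromBlocks (ω⁻¹ • P₁) 0 0 ((1 - ω)⁻¹ • P₂) + S

/-- The fused ESCI precision matrix `A_F(ω) = Hᵀ Bc(ω)⁻¹ H`, continuously
extended at the endpoints. -/
def AF (d : ℕ) (P₁ P₂ : Matrix (Fin d) (Fin d) ℝ)
    (S : Matrix (Fin d ⊕ Fin d) (Fin d ⊕ Fin d) ℝ) (ω : ℝ) :
    Matrix (Fin d) (Fin d) ℝ :=
  if ω = 0 then (P₂ + S.toBlocks₂₂)⁻¹
  else if ω = 1 then (P₁ + S.toBlocks₁₁)⁻¹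
  else (Hmat d)ᵀ * (Bc d P₁ P₂ S ω)⁻¹ * Hmat d

/-- The fused ESCI bound `B_F(ω) = A_F(ω)⁻¹`. -/
def BF (d : ℕ) (P₁ P₂ : Matrix (Fin d) (Fin d) ℝ)
    (S : Matrix (Fin d ⊕ Fin d) (Fin d ⊕ Fin d) ℝ) (ω : ℝ) :
    Matrix (Fin d) (Fin d) ℝ :=
  (AF d P₁ P₂ S ω)⁻¹

/-- `g(x) = inf_{P ∈ 𝒜} xᵀ Hᵀ P⁻¹ H x`. -/
def gfun (d : ℕ) (P₁ P₂ : Matrix (Fin d) (Fin d) ℝ)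
    (S : Matrix (Fin d ⊕ Fin d) (Fin d ⊕ Fin d) ℝ) (x : Fin d → ℝ) : ℝ :=
  ⨅ P : (Adm d P₁ P₂ S),
    x ⬝ᵥ ((Hmat d)ᵀ * ((P : Matrix (Fin d ⊕ Fin d) (Fin d ⊕ Fin d) ℝ))⁻¹ * Hmat d) *ᵥ x

/-- `h_x(ω) = xᵀ A_F(ω) x`. -/
def hfun (d : ℕ) (P₁ P₂ : Matrix (Fin d) (Fin d) ℝ)
    (S : Matrix (Fin d ⊕ Fin d) (Fin d ⊕ Fin d) ℝ) (x : Fin d → ℝ) (ω : ℝ) : ℝ :=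
  x ⬝ᵥ (AF d P₁ P₂ S ω) *ᵥ x

open Topology

namespace Matrix

variable {m n : Type*} [Fintype m] [Fintype n]

lemma dotProduct_transpose_mul_mul_mulVec {α : Type*} [CommSemiring α] (A : Matrix m n α)
    (B : Matrix m m α) (x : n → α) :
    x ⬝ᵥ (Aᵀ * B * A) *ᵥ x = (A *ᵥ x) ⬝ᵥ B *ᵥ (A *ᵥ x) := by
  rw [← mulVec_mulVec, ← mulVec_mulVec, dotProduct_mulVec, vecMul_transpose]

lemma sumElim_dotProduct_mulVec_sumElim {α : Type*} [CommSemiring α]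
    (R : Matrix (m ⊕ n) (m ⊕ n) α) (a : m → α) (b : n → α) :
    Sum.elim a b ⬝ᵥ R *ᵥ Sum.elim a b =
      a ⬝ᵥ R.toBlocks₁₁ *ᵥ a + a ⬝ᵥ R.toBlocks₁₂ *ᵥ b +
        (b ⬝ᵥ R.toBlocks₂₁ *ᵥ a + b ⬝ᵥ R.toBlocks₂₂ *ᵥ b) := by
  conv_lhs => rw [← fromBlocks_toBlocks R]
  simp only [fromBlocks_mulVec, Sum.elim_comp_inl, Sum.elim_comp_inr,
    sumElim_dotProduct_sumElim, dotProduct_add]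

lemma mulVec_sumElim_zero {α : Type*} [CommSemiring α] (R : Matrix (m ⊕ n) (m ⊕ n) α)
    (b : n → α) : R *ᵥ Sum.elim 0 b = Sum.elim (R.toBlocks₁₂ *ᵥ b) (R.toBlocks₂₂ *ᵥ b) := by
  conv_lhs => rw [← fromBlocks_toBlocks R]
  simp only [fromBlocks_mulVec, Sum.elim_comp_inl, Sum.elim_comp_inr, mulVec_zero, zero_add]

lemma IsHermitian.dotProduct_mulVec_comm {A : Matrix m m ℝ} (hA : A.IsHermitian) (x y : m → ℝ) :
    x ⬝ᵥ A *ᵥ y = y ⬝ᵥ A *ᵥ x := by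
  rw [dotProduct_mulVec, ← mulVec_transpose, ← conjTranspose_eq_transpose_of_trivial, hA.eq,
    dotProduct_comm]

lemma IsHermitian.dotProduct_toBlocks₂₁_mulVec {R : Matrix (m ⊕ n) (m ⊕ n) ℝ}
    (hR : R.IsHermitian) (a : m → ℝ) (b : n → ℝ) :
    b ⬝ᵥ R.toBlocks₂₁ *ᵥ a = a ⬝ᵥ R.toBlocks₁₂ *ᵥ b := by
  rw [← fromBlocks_toBlocks R, isHermitian_fromBlocks_iff] at hR
  rw [← hR.2.1, conjTranspose_eq_transpose_of_trivial, dotProduct_mulVec, vecMul_transpose,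
    dotProduct_comm]

lemma PosSemidef.fromBlocks_zero {A : Matrix m m ℝ} {D : Matrix n n ℝ} (hA : A.PosSemidef)
    (hD : D.PosSemidef) : (fromBlocks A 0 0 D).PosSemidef := by
  refine PosSemidef.of_dotProduct_mulVec_nonneg ?_ fun y => ?_
  · exact isHermitian_fromBlocks_iff.mpr ⟨hA.1, by simp, by simp, hD.1⟩
  · rw [star_trivial, ← Sum.elim_comp_inl_inr y, sumElim_dotProduct_mulVec_sumElim]
    simpa using add_nonneg (hA.dotProduct_mulVec_nonneg (y ∘ Sum.inl))
      (hD.dotProduct_mulVec_nonneg (y ∘ Sum.inr))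

lemma PosSemidef.sq_dotProduct_mulVec_le {A : Matrix m m ℝ} (hA : A.PosSemidef) (x y : m → ℝ) :
    (x ⬝ᵥ A *ᵥ y) ^ 2 ≤ (x ⬝ᵥ A *ᵥ x) * (y ⬝ᵥ A *ᵥ y) := by
  have hdisc : discrim (x ⬝ᵥ A *ᵥ x) (2 * (x ⬝ᵥ A *ᵥ y)) (y ⬝ᵥ A *ᵥ y) ≤ 0 := by
    refine discrim_le_zero fun r => ?_
    have h := hA.dotProduct_mulVec_nonneg (r • x + y)
    rw [star_trivial, mulVec_add, mulVec_smul, dotProduct_add, add_dotProduct, add_dotProduct,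
      smul_dotProduct, smul_dotProduct, dotProduct_smul, dotProduct_smul,
      hA.1.dotProduct_mulVec_comm y x] at h
    simp only [smul_eq_mul] at h
    linarith
  rw [discrim] at hdisc
  linarith

lemma PosSemidef.fromBlocks_vecMulVec {A : Matrix m m ℝ} {D : Matrix n n ℝ} (hA : A.PosSemidef)
    (hD : D.PosSemidef) {p : m → ℝ} {q : n → ℝ} (hpq : (p ⬝ᵥ A *ᵥ p) * (q ⬝ᵥ D *ᵥ q) ≤ 1) :
    (fromBlocks A (vecMulVec (A *ᵥ p) (D *ᵥ q)) (vecMulVec (D *ᵥ q) (A *ᵥ p)) D).PosSemidef := by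
  refine PosSemidef.of_dotProduct_mulVec_nonneg ?_ fun y => ?_
  · refine isHermitian_fromBlocks_iff.mpr ⟨hA.1, ?_, ?_, hD.1⟩ <;>
      simp only [conjTranspose_eq_transpose_of_trivial, transpose_vecMulVec]
  rw [star_trivial, ← Sum.elim_comp_inl_inr y, sumElim_dotProduct_mulVec_sumElim]
  set y₁ := y ∘ Sum.inl
  set y₂ := y ∘ Sum.inr
  simp only [toBlocks_fromBlocks₁₁, toBlocks_fromBlocks₁₂, toBlocks_fromBlocks₂₁,
    toBlocks_fromBlocks₂₂, vecMulVec_mulVec, op_smul_eq_smul, dotProduct_smul, smul_eq_mul]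
  rw [dotProduct_comm (D *ᵥ q), dotProduct_comm (A *ᵥ p)]
  have a₀ : 0 ≤ y₁ ⬝ᵥ A *ᵥ y₁ := by simpa using hA.dotProduct_mulVec_nonneg y₁
  have b₀ : 0 ≤ y₂ ⬝ᵥ D *ᵥ y₂ := by simpa using hD.dotProduct_mulVec_nonneg y₂
  have hcross : ((y₁ ⬝ᵥ A *ᵥ p) * (y₂ ⬝ᵥ D *ᵥ q)) ^ 2 ≤ (y₁ ⬝ᵥ A *ᵥ y₁) * (y₂ ⬝ᵥ D *ᵥ y₂) :=
    calc _ = (y₁ ⬝ᵥ A *ᵥ p) ^ 2 * (y₂ ⬝ᵥ D *ᵥ q) ^ 2 := by ring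
      _ ≤ ((y₁ ⬝ᵥ A *ᵥ y₁) * (p ⬝ᵥ A *ᵥ p)) * ((y₂ ⬝ᵥ D *ᵥ y₂) * (q ⬝ᵥ D *ᵥ q)) :=
        mul_le_mul (hA.sq_dotProduct_mulVec_le y₁ p) (hD.sq_dotProduct_mulVec_le y₂ q)
          (sq_nonneg _) ((sq_nonneg _).trans (hA.sq_dotProduct_mulVec_le y₁ p))
      _ = (y₁ ⬝ᵥ A *ᵥ y₁) * (y₂ ⬝ᵥ D *ᵥ y₂) * ((p ⬝ᵥ A *ᵥ p) * (q ⬝ᵥ D *ᵥ q)) := by ring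
      _ ≤ _ := mul_le_of_le_one_right (by positivity) hpq
  -- AM-GM: `X² ≤ a b` with `a, b ≥ 0` gives `a + 2 X + b ≥ 0`.
  nlinarith [sq_nonneg (y₁ ⬝ᵥ A *ᵥ y₁ - y₂ ⬝ᵥ D *ᵥ y₂)]

variable [DecidableEq m] [DecidableEq n]

lemma mulVec_nonsing_inv_mulVec {A : Matrix m m ℝ} (hA : IsUnit A) (v : m → ℝ) :
    A *ᵥ (A⁻¹ *ᵥ v) = v := by
  rw [mulVec_mulVec, mul_nonsing_inv _ ((isUnit_iff_isUnit_det _).mp hA), one_mulVec]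

lemma nonsing_inv_mulVec_mulVec {A : Matrix m m ℝ} (hA : IsUnit A) (v : m → ℝ) :
    A⁻¹ *ᵥ (A *ᵥ v) = v := by
  rw [mulVec_mulVec, nonsing_inv_mul _ ((isUnit_iff_isUnit_det _).mp hA), one_mulVec]

lemma PosDef.two_mul_dotProduct_sub_le_dotProduct_inv_mulVec {B : Matrix m m ℝ}
    (hB : B.PosDef) (z w : m → ℝ) :
    2 * (w ⬝ᵥ z) - w ⬝ᵥ B *ᵥ w ≤ z ⬝ᵥ B⁻¹ *ᵥ z := by
  set y := B⁻¹ *ᵥ z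
  have hy : B *ᵥ y = z := mulVec_nonsing_inv_mulVec hB.isUnit z
  have hsq := hB.posSemidef.dotProduct_mulVec_nonneg (w - y)
  rw [star_trivial, mulVec_sub, hy, dotProduct_sub, sub_dotProduct, sub_dotProduct,
    hB.1.dotProduct_mulVec_comm y w, hy] at hsq
  have := dotProduct_comm z w
  have := dotProduct_comm y z
  linarith

lemma PosDef.dotProduct_inv_toBlocks₂₂_mulVec_le {A : Matrix (m ⊕ n) (m ⊕ n) ℝ}
    (hA : A.PosDef) (y : m → ℝ) (x : n → ℝ) :
    x ⬝ᵥ A.toBlocks₂₂⁻¹ *ᵥ x ≤ Sum.elim y x ⬝ᵥ A⁻¹ *ᵥ Sum.elim y x := by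
  have hA₂₂ : A.toBlocks₂₂.PosDef := hA.submatrix Sum.inr_injective
  set u := A.toBlocks₂₂⁻¹ *ᵥ x
  have hu : A.toBlocks₂₂ *ᵥ u = x := mulVec_nonsing_inv_mulVec hA₂₂.isUnit x
  have key := hA.two_mul_dotProduct_sub_le_dotProduct_inv_mulVec (Sum.elim y x) (Sum.elim 0 u)
  rw [sumElim_dotProduct_mulVec_sumElim, sumElim_dotProduct_sumElim, hu] at key
  simp only [zero_dotProduct, dotProduct_zero, mulVec_zero, zero_add] at key
  rw [dotProduct_comm]
  linarith

end Matrix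

lemma HasDerivWithinAt.le_of_eventually_le {f g : ℝ → ℝ} {f' g' a b : ℝ} (hab : a < b)
    (hf : HasDerivWithinAt f f' (Icc a b) a) (hg : HasDerivWithinAt g g' (Icc a b) a)
    (hle : ∀ᶠ x in 𝓝[Icc a b] a, g x ≤ f x) (heq : g a = f a) : g' ≤ f' := by
  have hmin : IsLocalMinOn (f - g) (Icc a b) a :=
    hle.mono fun x hx => by simp only [Pi.sub_apply, heq, sub_self]; linarith
  have := hmin.hasFDerivWithinAt_nonneg (hf.sub hg).hasFDerivWithinAt
    (sub_mem_posTangentConeAt_of_segment_subset (segment_eq_Icc hab.le).subset)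
  simp only [ContinuousLinearMap.toSpanSingleton_apply, smul_eq_mul] at this
  nlinarith

section

variable {d : ℕ} {P₁ P₂ : Matrix (Fin d) (Fin d) ℝ} {S : Matrix (Fin d ⊕ Fin d) (Fin d ⊕ Fin d) ℝ}

lemma Hmat_mulVec (x : Fin d → ℝ) : Hmat d *ᵥ x = Sum.elim x x := by
  rw [Hmat, fromRows_mulVec, one_mulVec]

lemma dotProduct_Hmat_mulVec (A : Matrix (Fin d ⊕ Fin d) (Fin d ⊕ Fin d) ℝ) (x : Fin d → ℝ) :
    x ⬝ᵥ ((Hmat d)ᵀ * A * Hmat d) *ᵥ x = Sum.elim x x ⬝ᵥ A *ᵥ Sum.elim x x := by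
  rw [dotProduct_transpose_mul_mul_mulVec, Hmat_mulVec]

lemma posDef_of_mem_Adm (hS : S.PosDef) {P : Matrix (Fin d ⊕ Fin d) (Fin d ⊕ Fin d) ℝ}
    (hP : P ∈ Adm d P₁ P₂ S) : P.PosDef := by
  obtain ⟨Q, hQ, -, -, rfl⟩ := hP
  exact PosDef.posSemidef_add hQ hS

lemma toBlocks₂₂_of_mem_Adm {P : Matrix (Fin d ⊕ Fin d) (Fin d ⊕ Fin d) ℝ}
    (hP : P ∈ Adm d P₁ P₂ S) : P.toBlocks₂₂ = P₂ + S.toBlocks₂₂ := by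
  obtain ⟨Q, -, -, rfl, rfl⟩ := hP
  rfl

lemma posDef_Bc (hP₁ : P₁.PosSemidef) (hP₂ : P₂.PosSemidef) (hS : S.PosDef) {ω : ℝ}
    (hω : ω ∈ Ioo 0 1) : (Bc d P₁ P₂ S ω).PosDef :=
  PosDef.posSemidef_add (PosSemidef.fromBlocks_zero (hP₁.smul (inv_nonneg.mpr hω.1.le))
    (hP₂.smul (inv_nonneg.mpr (sub_nonneg.mpr hω.2.le)))) hS

lemma hfun_zero (x : Fin d → ℝ) :
    hfun d P₁ P₂ S x 0 = x ⬝ᵥ (P₂ + S.toBlocks₂₂)⁻¹ *ᵥ x := by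
  rw [hfun, AF, if_pos rfl]

lemma posDef_add_toBlocks₂₂ (hP₂ : P₂.PosSemidef) (hS : S.PosDef) :
    (P₂ + S.toBlocks₂₂).PosDef :=
  PosDef.posSemidef_add hP₂ (hS.submatrix Sum.inr_injective)

lemma hfun_zero_eq_dotProduct (hP₂ : P₂.PosSemidef) (hS : S.PosDef) {x u : Fin d → ℝ}
    (hu : (P₂ + S.toBlocks₂₂) *ᵥ u = x) : hfun d P₁ P₂ S x 0 = x ⬝ᵥ u := by
  rw [hfun_zero, ← hu, nonsing_inv_mulVec_mulVec (posDef_add_toBlocks₂₂ hP₂ hS).isUnit]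

lemma hfun_eq_of_mem_Ioo (x : Fin d → ℝ) {ω : ℝ} (hω : ω ∈ Ioo 0 1) :
    hfun d P₁ P₂ S x ω = Sum.elim x x ⬝ᵥ (Bc d P₁ P₂ S ω)⁻¹ *ᵥ Sum.elim x x := by
  rw [hfun, AF, if_neg hω.1.ne', if_neg hω.2.ne, dotProduct_Hmat_mulVec]

lemma hfun_zero_le_of_mem_Adm (hS : S.PosDef) (x : Fin d → ℝ)
    {P : Matrix (Fin d ⊕ Fin d) (Fin d ⊕ Fin d) ℝ} (hP : P ∈ Adm d P₁ P₂ S) :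
    hfun d P₁ P₂ S x 0 ≤ x ⬝ᵥ ((Hmat d)ᵀ * P⁻¹ * Hmat d) *ᵥ x := by
  rw [hfun_zero, dotProduct_Hmat_mulVec, ← toBlocks₂₂_of_mem_Adm hP]
  exact (posDef_of_mem_Adm hS hP).dotProduct_inv_toBlocks₂₂_mulVec_le x x

lemma le_hfun_of_mem_Ioo (hP₁ : P₁.PosSemidef) (hP₂ : P₂.PosSemidef) (hS : S.PosDef)
    {x u a : Fin d → ℝ} (hu : (P₂ + S.toBlocks₂₂) *ᵥ u = x) (ha : P₁ *ᵥ a + S.toBlocks₁₂ *ᵥ u = x) {ω : ℝ}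
    (hω : ω ∈ Ioo 0 1) :
    x ⬝ᵥ u + u ⬝ᵥ P₂ *ᵥ u + ω * (a ⬝ᵥ P₁ *ᵥ a) - (1 - ω)⁻¹ * (u ⬝ᵥ P₂ *ᵥ u) -
      ω ^ 2 * (a ⬝ᵥ S.toBlocks₁₁ *ᵥ a) ≤ hfun d P₁ P₂ S x ω := by
  rw [hfun_eq_of_mem_Ioo x hω]
  refine le_of_eq_of_le ?_
    ((posDef_Bc hP₁ hP₂ hS hω).two_mul_dotProduct_sub_le_dotProduct_inv_mulVec
      (Sum.elim x x) (Sum.elim (ω • a) u))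
  have hax : a ⬝ᵥ x = a ⬝ᵥ P₁ *ᵥ a + a ⬝ᵥ S.toBlocks₁₂ *ᵥ u := by
    rw [← ha, dotProduct_add]
  have hux : u ⬝ᵥ x = u ⬝ᵥ P₂ *ᵥ u + u ⬝ᵥ S.toBlocks₂₂ *ᵥ u := by
    rw [← hu, add_mulVec, dotProduct_add]
  rw [Bc, add_mulVec, dotProduct_add, sumElim_dotProduct_mulVec_sumElim,
    sumElim_dotProduct_mulVec_sumElim, sumElim_dotProduct_sumElim,
    hS.1.dotProduct_toBlocks₂₁_mulVec]
  simp only [toBlocks_fromBlocks₁₁, toBlocks_fromBlocks₁₂, toBlocks_fromBlocks₂₁,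
    toBlocks_fromBlocks₂₂, zero_mulVec, dotProduct_zero, smul_mulVec, mulVec_smul,
    dotProduct_smul, smul_dotProduct, smul_eq_mul]
  rw [dotProduct_comm x u, hax, hux]
  field_simp [hω.1.ne']
  ring

lemma sub_le_of_hasDerivWithinAt_hfun (hP₁ : P₁.PosSemidef) (hP₂ : P₂.PosSemidef) (hS : S.PosDef)
    {x u a : Fin d → ℝ} (hu : (P₂ + S.toBlocks₂₂) *ᵥ u = x)
    (ha : P₁ *ᵥ a + S.toBlocks₁₂ *ᵥ u = x) {c : ℝ}
    (hder : HasDerivWithinAt (hfun d P₁ P₂ S x) c (Icc 0 1) 0) :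
    a ⬝ᵥ P₁ *ᵥ a - u ⬝ᵥ P₂ *ᵥ u ≤ c := by
  set s := a ⬝ᵥ P₁ *ᵥ a
  set t := u ⬝ᵥ P₂ *ᵥ u
  set q := a ⬝ᵥ S.toBlocks₁₁ *ᵥ a
  have hinv : HasDerivAt (fun ω : ℝ => (1 - ω)⁻¹) 1 0 :=
    (((hasDerivAt_id (0 : ℝ)).const_sub 1).inv (by norm_num)).congr_deriv (by norm_num)
  have hlow : HasDerivAt (fun ω => x ⬝ᵥ u + t + ω * s - (1 - ω)⁻¹ * t - ω ^ 2 * q) (s - t) 0 :=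
    (((((hasDerivAt_id (0 : ℝ)).mul_const s).const_add (x ⬝ᵥ u + t)).sub
      (hinv.mul_const t)).sub ((hasDerivAt_pow 2 (0 : ℝ)).mul_const q)).congr_deriv (by norm_num)
  refine HasDerivWithinAt.le_of_eventually_le one_pos hder hlow.hasDerivWithinAt ?_
    (by simp [hfun_zero_eq_dotProduct hP₂ hS hu])
  filter_upwards [self_mem_nhdsWithin, nhdsWithin_le_nhds (Iio_mem_nhds one_pos)]
    with ω ⟨hω₀, _⟩ hω₁
  rcases hω₀.eq_or_lt with rfl | hω₀
  · simp [hfun_zero_eq_dotProduct hP₂ hS hu]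
  · exact le_hfun_of_mem_Ioo hP₁ hP₂ hS hu ha ⟨hω₀, hω₁⟩

lemma exists_mem_Adm_mulVec_eq (hP₁ : P₁.PosSemidef) (hP₂ : P₂.PosSemidef) {x u a : Fin d → ℝ}
    (hu : (P₂ + S.toBlocks₂₂) *ᵥ u = x) (ha : P₁ *ᵥ a + S.toBlocks₁₂ *ᵥ u = x)
    (hlt : a ⬝ᵥ P₁ *ᵥ a < u ⬝ᵥ P₂ *ᵥ u) :
    ∃ P ∈ Adm d P₁ P₂ S, P *ᵥ Sum.elim 0 u = Sum.elim x x := by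
  set t := u ⬝ᵥ P₂ *ᵥ u
  have ht : 0 < t :=
    (by simpa using hP₁.dotProduct_mulVec_nonneg a : 0 ≤ a ⬝ᵥ P₁ *ᵥ a).trans_lt hlt
  set q := t⁻¹ • u
  have hq : q ⬝ᵥ P₂ *ᵥ q = t⁻¹ := by
    simp only [q, mulVec_smul, dotProduct_smul, smul_dotProduct, smul_eq_mul]
    field_simp
    rfl
  have hQ := hP₁.fromBlocks_vecMulVec hP₂ (p := a) (q := q) (by
    rw [hq, ← div_eq_mul_inv, div_le_one ht]; exact hlt.le)
  refine ⟨_ + S, ⟨_, hQ, toBlocks_fromBlocks₁₁ .., toBlocks_fromBlocks₂₂ .., rfl⟩, ?_⟩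
  have hKu : vecMulVec (P₁ *ᵥ a) (P₂ *ᵥ q) *ᵥ u = P₁ *ᵥ a := by
    rw [vecMulVec_mulVec, op_smul_eq_smul, dotProduct_comm]
    simp only [q, mulVec_smul, dotProduct_smul, smul_eq_mul]
    rw [inv_mul_cancel₀ ht.ne', one_smul]
  rw [add_mulVec, mulVec_sumElim_zero, mulVec_sumElim_zero, toBlocks_fromBlocks₁₂,
    toBlocks_fromBlocks₂₂, hKu, ← Sum.elim_add_add, ha, ← add_mulVec, hu]

end

theorem gfun_eq_hfun_zero_of_deriv_neg_general (d : ℕ)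
    (P₁ P₂ : Matrix (Fin d) (Fin d) ℝ) (hP₁ : P₁.PosDef) (hP₂ : P₂.PosDef)
    (S : Matrix (Fin d ⊕ Fin d) (Fin d ⊕ Fin d) ℝ) (hS : S.PosDef)
    (x : Fin d → ℝ) (c : ℝ)
    (hder : HasDerivWithinAt (hfun d P₁ P₂ S x) c (Set.Icc (0 : ℝ) 1) 0)
    (hneg : c < 0) :
    gfun d P₁ P₂ S x = hfun d P₁ P₂ S x 0 ∧
    hfun d P₁ P₂ S x 0 = x ⬝ᵥ (P₂ + S.toBlocks₂₂)⁻¹ *ᵥ x ∧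
    ∃ P ∈ Adm d P₁ P₂ S,
      x ⬝ᵥ ((Hmat d)ᵀ * P⁻¹ * Hmat d) *ᵥ x = hfun d P₁ P₂ S x 0 := by
  set u := (P₂ + S.toBlocks₂₂)⁻¹ *ᵥ x
  have hu : (P₂ + S.toBlocks₂₂) *ᵥ u = x :=
    mulVec_nonsing_inv_mulVec (posDef_add_toBlocks₂₂ hP₂.posSemidef hS).isUnit x
  set a := P₁⁻¹ *ᵥ (x - S.toBlocks₁₂ *ᵥ u)
  have ha : P₁ *ᵥ a + S.toBlocks₁₂ *ᵥ u = x := by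
    rw [mulVec_nonsing_inv_mulVec hP₁.isUnit, sub_add_cancel]
  have hslope := sub_le_of_hasDerivWithinAt_hfun hP₁.posSemidef hP₂.posSemidef hS hu ha hder
  obtain ⟨P, hP, hPu⟩ :=
    exists_mem_Adm_mulVec_eq hP₁.posSemidef hP₂.posSemidef hu ha (by linarith)
  have hval : x ⬝ᵥ ((Hmat d)ᵀ * P⁻¹ * Hmat d) *ᵥ x = hfun d P₁ P₂ S x 0 := by
    rw [hfun_zero_eq_dotProduct hP₂.posSemidef hS hu, dotProduct_Hmat_mulVec, ← hPu,
      nonsing_inv_mulVec_mulVec (posDef_of_mem_Adm hS hP).isUnit, hPu,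
      sumElim_dotProduct_sumElim, dotProduct_zero, zero_add]
  refine ⟨?_, hfun_zero x, P, hP, hval⟩
  have : Nonempty (Adm d P₁ P₂ S) := ⟨⟨P, hP⟩⟩
  exact ciInf_eq_of_forall_ge_of_forall_gt_exists_lt (fun Q => hfun_zero_le_of_mem_Adm hS x Q.2)
    fun w hw => ⟨⟨P, hP⟩, hval.trans_lt hw⟩

/-- if the right-hand derivative of `h_x` at `ω = 0` is strictly
negative, then `g(x) = h_x(0) = xᵀ (P₂ + S₂₂)⁻¹ x`, and the infimum defining
`g(x)` is attained at some `P* ∈ 𝒜`. -/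
theorem gfun_eq_hfun_zero_of_deriv_neg (d : ℕ) (hd : 1 ≤ d)
    (P₁ P₂ : Matrix (Fin d) (Fin d) ℝ) (hP₁ : P₁.PosDef) (hP₂ : P₂.PosDef)
    (S : Matrix (Fin d ⊕ Fin d) (Fin d ⊕ Fin d) ℝ) (hS : S.PosDef)
    (x : Fin d → ℝ) (hx : x ≠ 0) (c : ℝ)
    (hder : HasDerivWithinAt (hfun d P₁ P₂ S x) c (Set.Icc (0 : ℝ) 1) 0)
    (hneg : c < 0) :
    gfun d P₁ P₂ S x = hfun d P₁ P₂ S x 0 ∧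
    hfun d P₁ P₂ S x 0 = x ⬝ᵥ (P₂ + S.toBlocks₂₂)⁻¹ *ᵥ x ∧
    ∃ P ∈ Adm d P₁ P₂ S,
      x ⬝ᵥ ((Hmat d)ᵀ * P⁻¹ * Hmat d) *ᵥ x = hfun d P₁ P₂ S x 0 :=
  gfun_eq_hfun_zero_of_deriv_neg_general d P₁ P₂ hP₁ hP₂ S hS x c hder hneg
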